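/- Consider gradient flow on a depth-L matrix factorization (L ≥ 2) for the 2×2 matrix-completion loss with balanced initialization, and assume det(W_{L:1}(0)) > 0. Then for any quasi-norm N on 2×2 real matrices with weakened-triangle constant c ≥ 1, for every t ≥ 0 with ℓ(t) > 0, N(W_{L:1}(t)) ≥ a_N/√(ℓ(t)) − b_N, where a_N = N(e₁e₁ᵀ)/(√2·c), b_N = max{√2·a_N, 8c²·max_{i,j ∈ {1,2}} N(e_i e_jᵀ)}, and e₁, e₂ are the standard basis vectors of ℝ². -/

import Mathlib

open Matrix

/-- The matrix-completion loss `ℓ(W) = ½[(W₁₂−1)² + (W₂₁−1)² + W₂₂²]`. -/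
noncomputable def mcLoss (A : Matrix (Fin 2) (Fin 2) ℝ) : ℝ :=
  (1 / 2) * ((A 0 1 - 1) ^ 2 + (A 1 0 - 1) ^ 2 + A 1 1 ^ 2)

/-- The gradient of the loss: `∇ℓ(W) = [[0, W₁₂ − 1], [W₂₁ − 1, W₂₂]]`. -/
noncomputable def mcGrad (A : Matrix (Fin 2) (Fin 2) ℝ) : Matrix (Fin 2) (Fin 2) ℝ :=
  !![0, A 0 1 - 1; A 1 0 - 1, A 1 1]

/-!
Gradient flow preserves balancedness, so the end-to-end matrix `A = W_{L:1}` satisfies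
`AᵀA = C^L` for the first-layer Gram matrix `C = W₁ᵀW₁`, which itself evolves by
`C' = -(∇ℓᵀA + Aᵀ∇ℓ)`. Since `adj(C) Aᵀ (adj(C) Aᵀ)ᵀ = det(C)² C^(L-2)`, Jacobi's formula and
Cauchy–Schwarz give `(det C)' ≥ -K det C` with `K` continuous, so `det C` stays positive by a
Grönwall argument; then `det A` never vanishes and, by continuity, stays positive.

For a 2×2 matrix with positive determinant and loss `ℓ < 1/2`, the entries `A₁₂, A₂₁` are within
`ε = √(2ℓ)` of `1` and `|A₂₂| ≤ ε`, so `A₁₁A₂₂ > A₁₂A₂₁ ≥ (1-ε)²` forces `|A₁₁| ≥ 1/ε - 2`.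
Writing `A₁₁ e₁e₁ᵀ` as `A` minus the other three entries, the quasi-triangle inequality turns this
into the lower bound on `N(A)`.
-/

open Set

section EntrywiseDeriv

variable {m n p : Type*}

/-- Matrices carry no global norm, so derivatives of matrix-valued curves are taken entrywise. -/
def HasEntrywiseDerivAt (f : ℝ → Matrix m n ℝ) (f' : Matrix m n ℝ) (t : ℝ) : Prop :=
  ∀ i j, HasDerivAt (fun s => f s i j) (f' i j) t

namespace HasEntrywiseDerivAt

variable {f g : ℝ → Matrix m n ℝ} {f' g' : Matrix m n ℝ} {t : ℝ}

lemma mul [Fintype n] {g : ℝ → Matrix n p ℝ} {g' : Matrix n p ℝ}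
    (hf : HasEntrywiseDerivAt f f' t) (hg : HasEntrywiseDerivAt g g' t) :
    HasEntrywiseDerivAt (fun s => f s * g s) (f' * g t + f t * g') t := by
  intro i j
  simpa only [Matrix.mul_apply, Matrix.add_apply, ← Finset.sum_add_distrib] using
    HasDerivAt.fun_sum fun k _ => (hf i k).fun_mul (hg k j)

lemma transpose (hf : HasEntrywiseDerivAt f f' t) :
    HasEntrywiseDerivAt (fun s => (f s)ᵀ) f'ᵀ t :=
  fun i j => hf j i

lemma sub (hf : HasEntrywiseDerivAt f f' t) (hg : HasEntrywiseDerivAt g g' t) :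
    HasEntrywiseDerivAt (fun s => f s - g s) (f' - g') t :=
  fun i j => (hf i j).sub (hg i j)

lemma reindex {m' n' : Type*} (hf : HasEntrywiseDerivAt f f' t) (eₘ : m ≃ m') (eₙ : n ≃ n') :
    HasEntrywiseDerivAt (fun s => Matrix.reindex eₘ eₙ (f s)) (Matrix.reindex eₘ eₙ f') t :=
  fun i j => hf (eₘ.symm i) (eₙ.symm j)

lemma congr_deriv (hf : HasEntrywiseDerivAt f f' t) (h : f' = g') :
    HasEntrywiseDerivAt f g' t :=
  h ▸ hf

lemma continuousAt (hf : HasEntrywiseDerivAt f f' t) : ContinuousAt f t :=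
  continuousAt_pi.2 fun i => continuousAt_pi.2 fun j => (hf i j).continuousAt

lemma eq_apply_zero_of_zero (hf : ∀ s, 0 ≤ s → HasEntrywiseDerivAt f 0 s) {t : ℝ}
    (ht : 0 ≤ t) : f t = f 0 := by
  ext i j
  exact constant_of_has_deriv_right_zero
    (fun s hs => (hf s hs.1 i j).continuousAt.continuousWithinAt)
    (fun s hs => (hf s hs.1 i j).hasDerivWithinAt) t ⟨ht, le_rfl⟩

end HasEntrywiseDerivAt

lemma hasDerivAt_det_fin_two {C : ℝ → Matrix (Fin 2) (Fin 2) ℝ} {C' : Matrix (Fin 2) (Fin 2) ℝ}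
    {t : ℝ} (hC : HasEntrywiseDerivAt C C' t) :
    HasDerivAt (fun s => (C s).det) ((C t).adjugate * C').trace t := by
  simp only [Matrix.det_fin_two]
  refine (((hC 0 0).fun_mul (hC 1 1)).fun_sub ((hC 0 1).fun_mul (hC 1 0))).congr_deriv ?_
  simp [Matrix.trace_fin_two, Matrix.adjugate_fin_two, Matrix.vecMul, dotProduct]
  ring

end EntrywiseDeriv

theorem ContinuousAt.matrix_mul {X m n p R : Type*} [TopologicalSpace X] [TopologicalSpace R]
    [Fintype n] [Mul R] [AddCommMonoid R] [ContinuousAdd R] [ContinuousMul R]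
    {A : X → Matrix m n R} {B : X → Matrix n p R} {x : X}
    (hA : ContinuousAt A x) (hB : ContinuousAt B x) : ContinuousAt (fun y => A y * B y) x :=
  (continuous_fst.matrix_mul continuous_snd).continuousAt.comp (hA.prodMk hB)

lemma pos_of_neg_mul_le_deriv {f f' K : ℝ → ℝ} {a b : ℝ} (hab : a ≤ b)
    (hK : ContinuousOn K (Icc a b)) (hf : ∀ s ∈ Icc a b, HasDerivAt f (f' s) s)
    (hf_nonneg : ∀ s ∈ Icc a b, 0 ≤ f s) (hf' : ∀ s ∈ Icc a b, -(K s * f s) ≤ f' s)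
    (ha : 0 < f a) : 0 < f b := by
  obtain ⟨k, hk⟩ := isCompact_Icc.exists_bound_of_continuousOn hK
  have hmono : MonotoneOn (fun s => f s * Real.exp (k * s)) (Icc a b) := by
    have hderiv : ∀ s ∈ Icc a b, HasDerivAt (fun s => f s * Real.exp (k * s))
        (f' s * Real.exp (k * s) + f s * (Real.exp (k * s) * k)) s := fun s hs =>
      (hf s hs).mul (((hasDerivAt_id s).const_mul k).exp.congr_deriv (by simp))
    refine monotoneOn_of_hasDerivWithinAt_nonneg (convex_Icc a b)
      (fun s hs => (hderiv s hs).continuousAt.continuousWithinAt)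
      (fun s hs => (hderiv s (interior_subset hs)).hasDerivWithinAt) fun s hs => ?_
    have hs' := interior_subset hs
    have hKs : K s ≤ k := (le_abs_self _).trans (by simpa using hk s hs')
    have := mul_le_mul_of_nonneg_right hKs (hf_nonneg s hs')
    nlinarith [hf' s hs', Real.exp_pos (k * s)]
  have := hmono ⟨le_rfl, hab⟩ ⟨hab, le_rfl⟩ hab
  have hb := (mul_pos ha (Real.exp_pos (k * a))).trans_le this
  exact pos_of_mul_pos_left hb (Real.exp_pos _).le

lemma pos_of_continuousOn_of_ne_zero {f : ℝ → ℝ} (hf : ContinuousOn f (Ici 0))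
    (hne : ∀ t, 0 ≤ t → f t ≠ 0) (h0 : 0 < f 0) {t : ℝ} (ht : 0 ≤ t) : 0 < f t := by
  by_contra! hneg
  obtain ⟨u, hu, hfu⟩ := isPreconnected_Ici.intermediate_value (mem_Ici.2 ht) self_mem_Ici hf
    ⟨hneg, h0.le⟩
  exact hne u hu hfu

namespace Matrix

lemma reindex_transpose_mul {l n m' n' R : Type*} [Fintype l] [Fintype m'] [AddCommMonoid R]
    [Mul R] (eₗ : l ≃ m') (e : n ≃ n') (A B : Matrix l n R) :
    reindex e e (Aᵀ * B) = (reindex eₗ e A)ᵀ * reindex eₗ e B := by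
  rw [reindex_apply, reindex_apply, reindex_apply, transpose_submatrix, submatrix_mul_equiv]

variable {m n R : Type*} [Fintype m] [Fintype n] [CommRing R]

lemma trace_mul_sq_le [LinearOrder R] [IsStrictOrderedRing R] (A : Matrix n m R)
    (B : Matrix m n R) :
    (A * B).trace ^ 2 ≤ (A * Aᵀ).trace * (Bᵀ * B).trace := by
  simpa only [trace, diag, mul_apply, transpose_apply, ← sq, ← Fintype.sum_prod_type',
    Finset.sum_comm (γ := m)] using
    Finset.sum_mul_sq_le_sq_mul_sq Finset.univ (fun p : n × m => A p.1 p.2) fun p => B p.2 p.1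

variable [DecidableEq n]

lemma adjugate_mul_transpose_mul_self_eq {C : Matrix n n R} {A : Matrix m n R} {L : ℕ}
    (hC : Cᵀ = C) (hA : Aᵀ * A = C ^ L) (hL : 2 ≤ L) :
    (C.adjugate * Aᵀ) * (C.adjugate * Aᵀ)ᵀ = C.det ^ 2 • C ^ (L - 2) := by
  obtain ⟨k, rfl⟩ := Nat.exists_eq_add_of_le' hL
  rw [transpose_mul, transpose_transpose, adjugate_transpose, hC, Matrix.mul_assoc,
    ← Matrix.mul_assoc Aᵀ, hA, pow_succ, pow_succ', Nat.add_sub_cancel]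
  simp only [← Matrix.mul_assoc, adjugate_mul, smul_mul, Matrix.one_mul]
  rw [Matrix.mul_assoc, mul_adjugate, Matrix.mul_smul, Matrix.mul_one, smul_smul, sq]

lemma trace_adjugate_mul_add_eq {C : Matrix n n R} (hC : Cᵀ = C) (A G : Matrix m n R) :
    (C.adjugate * (Gᵀ * A + Aᵀ * G)).trace = 2 * (C.adjugate * Aᵀ * G).trace := by
  have : (C.adjugate * (Gᵀ * A)).trace = (C.adjugate * Aᵀ * G).trace := by
    rw [← trace_transpose]
    simp only [transpose_mul, transpose_transpose, adjugate_transpose, hC]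
    rw [trace_mul_comm, Matrix.mul_assoc]
  rw [Matrix.mul_add, trace_add, this, Matrix.mul_assoc]
  ring

lemma abs_trace_adjugate_mul_le {C : Matrix n n ℝ} {A G : Matrix m n ℝ} {L : ℕ}
    (hC : C.PosSemidef) (hA : Aᵀ * A = C ^ L) (hL : 2 ≤ L) :
    |2 * (C.adjugate * Aᵀ * G).trace| ≤ C.det * ((C ^ (L - 2)).trace + (Gᵀ * G).trace) := by
  have hsymm : Cᵀ = C := by simpa using hC.isHermitian.eq
  have hcs := trace_mul_sq_le (C.adjugate * Aᵀ) G
  rw [adjugate_mul_transpose_mul_self_eq hsymm hA hL, trace_smul, smul_eq_mul] at hcs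
  have hT := (hC.pow (L - 2)).trace_nonneg
  have hS := (posSemidef_conjTranspose_mul_self G).trace_nonneg
  simp only [conjTranspose_eq_transpose_of_trivial] at hS
  refine abs_le_of_sq_le_sq ?_ (mul_nonneg hC.det_nonneg (add_nonneg hT hS))
  nlinarith [sq_nonneg ((C ^ (L - 2)).trace - (Gᵀ * G).trace), sq_nonneg C.det]

end Matrix

lemma det_gram_pos_of_flow {m : Type*} [Fintype m] {L : ℕ} {A G : ℝ → Matrix m (Fin 2) ℝ}
    {C : ℝ → Matrix (Fin 2) (Fin 2) ℝ} (hL : 2 ≤ L) (hC_psd : ∀ t, 0 ≤ t → (C t).PosSemidef)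
    (hAC : ∀ t, 0 ≤ t → (A t)ᵀ * A t = C t ^ L)
    (hC : ∀ t, 0 ≤ t → HasEntrywiseDerivAt C (-((G t)ᵀ * A t + (A t)ᵀ * G t)) t)
    (hG : ∀ t, 0 ≤ t → ContinuousAt G t) (h0 : 0 < (C 0).det) {t : ℝ} (ht : 0 ≤ t) :
    0 < (C t).det := by
  refine pos_of_neg_mul_le_deriv (f := fun s => (C s).det)
    (K := fun s => (C s ^ (L - 2)).trace + ((G s)ᵀ * G s).trace) ht
    (continuousOn_of_forall_continuousAt fun s hs => ?_)
    (fun s hs => hasDerivAt_det_fin_two (hC s hs.1)) (fun s hs => (hC_psd s hs.1).det_nonneg)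
    (fun s hs => ?_) h0
  · have := (hC s hs.1).continuousAt
    have := hG s hs.1
    fun_prop
  · have hsymm : (C s)ᵀ = C s := by simpa using (hC_psd s hs.1).isHermitian.eq
    have hbound := abs_trace_adjugate_mul_le (G := G s) (hC_psd s hs.1) (hAC s hs.1) hL
    rw [Matrix.mul_neg, trace_neg, trace_adjugate_mul_add_eq hsymm]
    linarith [le_abs_self (2 * ((C s).adjugate * (A s)ᵀ * G s).trace)]

lemma det_pos_of_gram_flow {L : ℕ} {A G C : ℝ → Matrix (Fin 2) (Fin 2) ℝ} (hL : 2 ≤ L)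
    (hC_psd : ∀ t, 0 ≤ t → (C t).PosSemidef) (hAC : ∀ t, 0 ≤ t → (A t)ᵀ * A t = C t ^ L)
    (hC : ∀ t, 0 ≤ t → HasEntrywiseDerivAt C (-((G t)ᵀ * A t + (A t)ᵀ * G t)) t)
    (hA : ∀ t, 0 ≤ t → ContinuousAt A t) (hG : ∀ t, 0 ≤ t → ContinuousAt G t)
    (h0 : 0 < (A 0).det) {t : ℝ} (ht : 0 ≤ t) : 0 < (A t).det := by
  have hdet_sq : ∀ s, 0 ≤ s → (A s).det ^ 2 = (C s).det ^ L := fun s hs => by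
    rw [← det_pow (C s), ← hAC s hs, det_mul, det_transpose, sq]
  have hC0 : 0 < (C 0).det := by
    refine (hC_psd 0 le_rfl).det_nonneg.lt_of_ne fun h => h0.ne' ?_
    have := hdet_sq 0 le_rfl
    rwa [← h, zero_pow (by omega), sq_eq_zero_iff] at this
  refine pos_of_continuousOn_of_ne_zero (f := fun s => (A s).det)
    (continuousOn_of_forall_continuousAt fun s hs => ?_)
    (fun s hs h => ?_) h0 ht
  · have := hA s hs
    fun_prop
  · have := hdet_sq s hs
    rw [h, zero_pow two_ne_zero] at this
    exact (pow_pos (det_gram_pos_of_flow hL hC_psd hAC hC hG hC0 hs) L).ne' this.symm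

section Factorization

variable {L : ℕ} {d : ℕ → ℕ} {W : (l : ℕ) → Matrix (Fin (d (l + 1))) (Fin (d l)) ℝ}
  {P : (l : ℕ) → Matrix (Fin (d l)) (Fin (d 0)) ℝ}

lemma suffix_zero_eq_prefix {Q : (l : ℕ) → Matrix (Fin (d L)) (Fin (d l)) ℝ}
    (hP0 : P 0 = 1) (hPs : ∀ l, l < L → P (l + 1) = W l * P l)
    (hQL : Q L = 1) (hQs : ∀ l, l < L → Q l = Q (l + 1) * W l) : Q 0 = P L := by
  have hQP : ∀ l, l ≤ L → Q l * P l = P L := by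
    intro l hl
    induction hl using Nat.decreasingInduction with
    | self => rw [hQL, Matrix.one_mul]
    | of_succ l hl ih => rw [hQs l hl, Matrix.mul_assoc, ← hPs l hl, ih]
  simpa [hP0] using hQP 0 (Nat.zero_le L)

lemma transpose_mul_self_prefix_eq_pow
    (hbal : ∀ l, l + 1 < L → (W (l + 1))ᵀ * W (l + 1) = W l * (W l)ᵀ)
    (hP0 : P 0 = 1) (hPs : ∀ l, l < L → P (l + 1) = W l * P l) :
    ∀ l, l ≤ L → (P l)ᵀ * P l = ((W 0)ᵀ * W 0) ^ l := by
  have hcomm : ∀ l, l < L → (W l)ᵀ * W l * P l = P l * ((W 0)ᵀ * W 0) := by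
    intro l hl
    induction l with
    | zero => rw [hP0, Matrix.mul_one, Matrix.one_mul]
    | succ l ih =>
      rw [hbal l hl, hPs l (by omega), Matrix.mul_assoc, ← Matrix.mul_assoc (W l)ᵀ,
        ih (by omega), ← Matrix.mul_assoc]
  intro l hl
  induction l with
  | zero => rw [hP0, transpose_one, Matrix.one_mul, pow_zero]
  | succ l ih =>
    rw [hPs l hl, transpose_mul, Matrix.mul_assoc, ← Matrix.mul_assoc (W l)ᵀ, hcomm l hl,
      ← Matrix.mul_assoc, ih (by omega), pow_succ]

end Factorization

section GradientFlow

variable {L : ℕ} {d : ℕ → ℕ} {W : (l : ℕ) → ℝ → Matrix (Fin (d (l + 1))) (Fin (d l)) ℝ}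
  {P : (l : ℕ) → ℝ → Matrix (Fin (d l)) (Fin (d 0)) ℝ}
  {Q : (l : ℕ) → ℝ → Matrix (Fin (d L)) (Fin (d l)) ℝ} {G : ℝ → Matrix (Fin (d L)) (Fin (d 0)) ℝ}

lemma balanced_of_gradientFlow
    (hPs : ∀ l, l < L → ∀ t, P (l + 1) t = W l t * P l t)
    (hQs : ∀ l, l < L → ∀ t, Q l t = Q (l + 1) t * W l t)
    (hGF : ∀ l, l < L → ∀ t, 0 ≤ t →
      HasEntrywiseDerivAt (W l) (-((Q (l + 1) t)ᵀ * G t * (P l t)ᵀ)) t)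
    (hbal : ∀ l, l + 1 < L → (W (l + 1) 0)ᵀ * W (l + 1) 0 = W l 0 * (W l 0)ᵀ)
    {l : ℕ} (hl : l + 1 < L) {t : ℝ} (ht : 0 ≤ t) :
    (W (l + 1) t)ᵀ * W (l + 1) t = W l t * (W l t)ᵀ := by
  have hderiv : ∀ s, 0 ≤ s →
      HasEntrywiseDerivAt (fun r => (W (l + 1) r)ᵀ * W (l + 1) r - W l r * (W l r)ᵀ) 0 s := by
    intro s hs
    have hnext := hGF (l + 1) hl s hs
    have hcur := hGF l (by omega) s hs
    refine ((hnext.transpose.mul hnext).sub (hcur.mul hcur.transpose)).congr_deriv ?_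
    rw [hQs (l + 1) hl s, hPs l (by omega) s]
    simp only [transpose_neg, transpose_mul, transpose_transpose, Matrix.neg_mul,
      Matrix.mul_neg, Matrix.mul_assoc]
    abel
  have := HasEntrywiseDerivAt.eq_apply_zero_of_zero hderiv ht
  rwa [hbal l hl, sub_self, sub_eq_zero] at this

lemma hasEntrywiseDerivAt_gram_zero (hL : 0 < L) (hP0 : ∀ t, P 0 t = 1)
    (hPs : ∀ l, l < L → ∀ t, P (l + 1) t = W l t * P l t)
    (hQL : ∀ t, Q L t = 1) (hQs : ∀ l, l < L → ∀ t, Q l t = Q (l + 1) t * W l t)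
    {t : ℝ} (hGF : HasEntrywiseDerivAt (W 0) (-((Q 1 t)ᵀ * G t * (P 0 t)ᵀ)) t) :
    HasEntrywiseDerivAt (fun s => (W 0 s)ᵀ * W 0 s) (-((G t)ᵀ * P L t + (P L t)ᵀ * G t)) t := by
  refine (hGF.transpose.mul hGF).congr_deriv ?_
  have hQ1 : Q 1 t * W 0 t = P L t := by
    rw [← hQs 0 hL t]
    exact suffix_zero_eq_prefix (W := (W · t)) (P := (P · t)) (Q := (Q · t)) (hP0 t)
      (fun l hl => hPs l hl t) (hQL t) fun l hl => hQs l hl t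
  rw [hP0 t, transpose_one, Matrix.mul_one, transpose_neg, transpose_mul, transpose_transpose,
    Matrix.neg_mul, Matrix.mul_neg, Matrix.mul_assoc, hQ1, ← Matrix.mul_assoc, ← transpose_mul,
    hQ1, neg_add]

lemma continuousAt_prefix (hP0 : ∀ t, P 0 t = 1)
    (hPs : ∀ l, l < L → ∀ t, P (l + 1) t = W l t * P l t)
    (hW : ∀ l, l < L → ∀ t, 0 ≤ t → ContinuousAt (W l) t) {t : ℝ} (ht : 0 ≤ t) :
    ∀ l, l ≤ L → ContinuousAt (P l) t := by
  intro l hl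
  induction l with
  | zero => simpa only [funext hP0] using continuousAt_const
  | succ l ih =>
    simpa only [funext (hPs l hl)] using (hW l hl t ht).matrix_mul (ih (by omega))

lemma det_reindex_prefix_pos (e₀ : Fin (d 0) ≃ Fin 2) (eL : Fin (d L) ≃ Fin 2) (hL : 2 ≤ L)
    {grad : Matrix (Fin (d L)) (Fin (d 0)) ℝ → Matrix (Fin (d L)) (Fin (d 0)) ℝ}
    (hgrad : Continuous grad)
    (hP0 : ∀ t, P 0 t = 1) (hPs : ∀ l, l < L → ∀ t, P (l + 1) t = W l t * P l t)
    (hQL : ∀ t, Q L t = 1) (hQs : ∀ l, l < L → ∀ t, Q l t = Q (l + 1) t * W l t)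
    (hGF : ∀ l, l < L → ∀ t, 0 ≤ t →
      HasEntrywiseDerivAt (W l) (-((Q (l + 1) t)ᵀ * grad (P L t) * (P l t)ᵀ)) t)
    (hbal : ∀ l, l + 1 < L → (W (l + 1) 0)ᵀ * W (l + 1) 0 = W l 0 * (W l 0)ᵀ)
    (hdet : 0 < (reindex eL e₀ (P L 0)).det) {t : ℝ} (ht : 0 ≤ t) :
    0 < (reindex eL e₀ (P L t)).det := by
  have hPL : ∀ s, 0 ≤ s → ContinuousAt (P L) s := fun s hs =>
    continuousAt_prefix hP0 hPs (fun l hl t ht => (hGF l hl t ht).continuousAt) hs L le_rfl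
  refine det_pos_of_gram_flow (A := fun s => reindex eL e₀ (P L s))
    (C := fun s => reindex e₀ e₀ ((W 0 s)ᵀ * W 0 s))
    (G := fun s => reindex eL e₀ (grad (P L s))) hL (fun s _ => ?_) (fun s hs => ?_)
    (fun s hs => ?_) (fun s hs => ?_) (fun s hs => ?_) hdet ht
  · simpa using (posSemidef_conjTranspose_mul_self (W 0 s)).submatrix e₀.symm
  · have hbal_s : ∀ l, l + 1 < L → (W (l + 1) s)ᵀ * W (l + 1) s = W l s * (W l s)ᵀ :=
      fun l hl => balanced_of_gradientFlow (G := (grad <| P L ·)) hPs hQs hGF hbal hl hs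
    rw [← reindex_transpose_mul, transpose_mul_self_prefix_eq_pow (W := (W · s)) (P := (P · s))
      hbal_s (hP0 s) (fun l hl => hPs l hl s) L le_rfl]
    simpa [coe_reindexAlgEquiv] using map_pow (reindexAlgEquiv ℝ ℝ e₀) _ L
  · refine ((hasEntrywiseDerivAt_gram_zero (G := (grad <| P L ·)) (by omega) hP0 hPs hQL hQs
      (hGF 0 (by omega) s hs)).reindex e₀ e₀).congr_deriv ?_
    rw [← reindex_transpose_mul eL, ← reindex_transpose_mul eL]
    rfl
  · exact (continuous_id.matrix_reindex eL e₀).continuousAt.comp (hPL s hs)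
  · exact (hgrad.matrix_reindex eL e₀).continuousAt.comp (hPL s hs)

end GradientFlow

lemma quasi_add_add_add_le {E : Type*} [Add E] {N : E → ℝ} {c : ℝ} (hc : 0 ≤ c)
    (hN_tri : ∀ x y, N (x + y) ≤ c * (N x + N y)) (x y z w : E) :
    N (x + (y + (z + w))) ≤ c * N x + c ^ 2 * N y + c ^ 3 * (N z + N w) := by
  have h₁ := hN_tri x (y + (z + w))
  have h₂ := mul_le_mul_of_nonneg_left (hN_tri y (z + w)) hc
  have h₃ := mul_le_mul_of_nonneg_left (hN_tri z w) (mul_nonneg hc hc)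
  nlinarith

section TwoByTwo

variable {N : Matrix (Fin 2) (Fin 2) ℝ → ℝ} {c : ℝ}

lemma abs_mul_quasiNorm_single_le (hc : 1 ≤ c) (hN_nonneg : ∀ A, 0 ≤ N A)
    (hN_hom : ∀ (α : ℝ) (A), N (α • A) = |α| * N A)
    (hN_tri : ∀ A B, N (A + B) ≤ c * (N A + N B)) {M : ℝ}
    (hM : ∀ i j, N (single i j (1 : ℝ)) ≤ M) {A : Matrix (Fin 2) (Fin 2) ℝ}
    (h01 : |A 0 1| ≤ 2) (h10 : |A 1 0| ≤ 2) (h11 : |A 1 1| ≤ 1) :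
    |A 0 0| * N (single 0 0 1) ≤ c * N A + 5 * c ^ 3 * M := by
  have hdecomp : A 0 0 • single 0 0 (1 : ℝ) = A + ((-A 0 1) • single 0 1 1 +
      ((-A 1 0) • single 1 0 1 + (-A 1 1) • single 1 1 1)) := by
    ext i j
    fin_cases i <;> fin_cases j <;> simp
  have h := quasi_add_add_add_le (by linarith) hN_tri A ((-A 0 1) • single 0 1 (1 : ℝ))
    ((-A 1 0) • single 1 0 1) ((-A 1 1) • single 1 1 1)
  simp only [← hdecomp, hN_hom, abs_neg] at h
  have e₁ := mul_le_mul h01 (hM 0 1) (hN_nonneg _) zero_le_two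
  have e₂ := mul_le_mul h10 (hM 1 0) (hN_nonneg _) zero_le_two
  have e₃ := mul_le_mul h11 (hM 1 1) (hN_nonneg _) zero_le_one
  have hM0 : 0 ≤ M := (hN_nonneg _).trans (hM 0 0)
  have hc₂ : c ^ 2 ≤ c ^ 3 := pow_le_pow_right₀ hc (by norm_num)
  nlinarith [mul_le_mul_of_nonneg_left e₁ (sq_nonneg c),
    mul_le_mul_of_nonneg_left (add_le_add e₂ e₃) (pow_nonneg (by linarith : 0 ≤ c) 3),
    mul_le_mul_of_nonneg_right hc₂ hM0]

lemma inv_sub_two_le_abs_of_det_pos {A : Matrix (Fin 2) (Fin 2) ℝ} {ε : ℝ} (hε : ε < 1)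
    (h01 : |A 0 1 - 1| ≤ ε) (h10 : |A 1 0 - 1| ≤ ε) (h11 : |A 1 1| ≤ ε) (hdet : 0 < A.det) :
    ε⁻¹ - 2 ≤ |A 0 0| := by
  rcases ((abs_nonneg _).trans h11).eq_or_lt with rfl | hε0
  · simpa using (abs_nonneg (A 0 0)).trans' (by norm_num)
  have hoff : (1 - ε) ^ 2 ≤ A 0 1 * A 1 0 := by
    rw [sq]
    exact mul_le_mul (by linarith [(abs_le.1 h01).1]) (by linarith [(abs_le.1 h10).1])
      (by linarith) (by linarith [(abs_le.1 h01).1])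
  have hdiag : (1 - ε) ^ 2 ≤ |A 0 0| * ε := by
    rw [det_fin_two] at hdet
    calc (1 - ε) ^ 2 ≤ A 0 0 * A 1 1 := by linarith
      _ ≤ |A 0 0 * A 1 1| := le_abs_self _
      _ ≤ |A 0 0| * ε := by rw [abs_mul]; exact mul_le_mul_of_nonneg_left h11 (abs_nonneg _)
  refine le_of_mul_le_mul_right ?_ hε0
  rw [sub_mul, inv_mul_cancel₀ hε0.ne']
  nlinarith

lemma abs_entries_le_sqrt_two_mul_mcLoss (A : Matrix (Fin 2) (Fin 2) ℝ) :
    |A 0 1 - 1| ≤ Real.sqrt (2 * mcLoss A) ∧ |A 1 0 - 1| ≤ Real.sqrt (2 * mcLoss A) ∧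
      |A 1 1| ≤ Real.sqrt (2 * mcLoss A) := by
  unfold mcLoss
  refine ⟨Real.abs_le_sqrt ?_, Real.abs_le_sqrt ?_, Real.abs_le_sqrt ?_⟩ <;>
    nlinarith [sq_nonneg (A 0 1 - 1), sq_nonneg (A 1 0 - 1), sq_nonneg (A 1 1)]

lemma quasiNorm_lower_bound_of_det_pos (hc : 1 ≤ c) (hN_nonneg : ∀ A, 0 ≤ N A)
    (hN_hom : ∀ (α : ℝ) (A), N (α • A) = |α| * N A)
    (hN_tri : ∀ A B, N (A + B) ≤ c * (N A + N B)) {A : Matrix (Fin 2) (Fin 2) ℝ}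
    (hdet : 0 < A.det) (hloss : 0 < mcLoss A) :
    N (single 0 0 (1 : ℝ)) / (Real.sqrt 2 * c) / Real.sqrt (mcLoss A) -
        max (Real.sqrt 2 * (N (single 0 0 (1 : ℝ)) / (Real.sqrt 2 * c)))
          (8 * c ^ 2 * max (max (N (single 0 0 (1 : ℝ))) (N (single 0 1 (1 : ℝ))))
              (max (N (single 1 0 (1 : ℝ))) (N (single 1 1 (1 : ℝ))))) ≤ N A := by
  set a := N (single 0 0 (1 : ℝ)) / (Real.sqrt 2 * c)
  set M := max (max (N (single 0 0 (1 : ℝ))) (N (single 0 1 (1 : ℝ))))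
    (max (N (single 1 0 (1 : ℝ))) (N (single 1 1 (1 : ℝ))))
  have hM : ∀ i j, N (single i j (1 : ℝ)) ≤ M := by
    intro i j
    fin_cases i <;> fin_cases j <;> simp [M]
  have hc0 : 0 < c := by linarith
  have ha : 0 ≤ a := div_nonneg (hN_nonneg _) (by positivity)
  have hsqrt_loss := Real.sqrt_pos.2 hloss
  rcases le_or_gt 1 (2 * mcLoss A) with hbig | hsmall
  · -- for `2ℓ ≥ 1` the left-hand side is nonpositive
    have : a / Real.sqrt (mcLoss A) ≤ Real.sqrt 2 * a := by
      rw [div_le_iff₀ hsqrt_loss, mul_assoc, mul_comm a, ← mul_assoc, ← Real.sqrt_mul zero_le_two]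
      exact le_mul_of_one_le_left ha (Real.one_le_sqrt.2 hbig)
    linarith [le_max_left (Real.sqrt 2 * a) (8 * c ^ 2 * M), hN_nonneg A]
  set ε := Real.sqrt (2 * mcLoss A)
  have hε1 : ε < 1 := (Real.sqrt_lt' one_pos).2 (by rwa [one_pow])
  obtain ⟨h01, h10, h11⟩ := abs_entries_le_sqrt_two_mul_mcLoss A
  have h00 := inv_sub_two_le_abs_of_det_pos hε1 h01 h10 h11 hdet
  have hbound := abs_mul_quasiNorm_single_le hc hN_nonneg hN_hom hN_tri hM
    (A := A) (by rw [abs_le] at h01 ⊢; constructor <;> linarith)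
    (by rw [abs_le] at h10 ⊢; constructor <;> linarith) (h11.trans hε1.le)
  have hε : a / Real.sqrt (mcLoss A) = ε⁻¹ * N (single 0 0 1) / c := by
    simp only [a, ε, Real.sqrt_mul zero_le_two]
    field_simp
  have hM0 : 0 ≤ M := (hN_nonneg _).trans (hM 0 0)
  have hc₃ : 1 ≤ c ^ 3 := one_le_pow₀ hc
  have hmain : ε⁻¹ * N (single 0 0 1) ≤ c * N A + 2 * M + 5 * c ^ 3 * M := by
    nlinarith [mul_le_mul_of_nonneg_right h00 (hN_nonneg (single 0 0 (1 : ℝ))), hM 0 0]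
  rw [hε, sub_le_iff_le_add, div_le_iff₀ hc0]
  nlinarith [mul_le_mul_of_nonneg_left (le_max_right (Real.sqrt 2 * a) (8 * c ^ 2 * M)) hc0.le,
    mul_le_mul_of_nonneg_right hc₃ hM0]

lemma continuous_mcGrad : Continuous mcGrad :=
  continuous_pi fun i => continuous_pi fun j => by
    fin_cases i <;> fin_cases j <;> simp [mcGrad] <;> fun_prop

end TwoByTwo

/-- Factors are indexed `0,…,L−1` (so `W l` maps `ℝ^{d l} → ℝ^{d (l+1)}`);
`P l t = W_{l−1}(t)⋯W_0(t)` and `Q l t = W_{L−1}(t)⋯W_l(t)` are the partial products, so the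
product matrix is `P L t`, identified with a 2×2 matrix via `reindex`. -/
theorem quasiNorm_lower_bound_deep_matrix_factorization_general
    (L : ℕ) (hL : 2 ≤ L)
    (d : ℕ → ℕ) (hd0 : d 0 = 2) (hdL : d L = 2)
    (W : (l : ℕ) → ℝ → Matrix (Fin (d (l + 1))) (Fin (d l)) ℝ)
    (P : (l : ℕ) → ℝ → Matrix (Fin (d l)) (Fin (d 0)) ℝ)
    (hP0 : ∀ t, P 0 t = 1)
    (hPs : ∀ l, l < L → ∀ t, P (l + 1) t = W l t * P l t)
    (Q : (l : ℕ) → ℝ → Matrix (Fin (d L)) (Fin (d l)) ℝ)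
    (hQL : ∀ t, Q L t = 1)
    (hQs : ∀ l, l < L → ∀ t, Q l t = Q (l + 1) t * W l t)
    (hGF : ∀ l, l < L → ∀ t : ℝ, 0 ≤ t → ∀ i j,
      HasDerivAt (fun s => W l s i j)
        ((-((Q (l + 1) t)ᵀ *
            Matrix.reindex (finCongr hdL).symm (finCongr hd0).symm
              (mcGrad (Matrix.reindex (finCongr hdL) (finCongr hd0) (P L t))) *
            (P l t)ᵀ)) i j) t)
    (hbal : ∀ l, l + 1 < L → (W (l + 1) 0)ᵀ * W (l + 1) 0 = W l 0 * (W l 0)ᵀ)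
    (hdet : 0 < (Matrix.reindex (finCongr hdL) (finCongr hd0) (P L 0)).det)
    (N : Matrix (Fin 2) (Fin 2) ℝ → ℝ) (c : ℝ) (hc : 1 ≤ c)
    (hN_nonneg : ∀ A, 0 ≤ N A)
    (hN_hom : ∀ (α : ℝ) (A), N (α • A) = |α| * N A)
    (hN_tri : ∀ A B, N (A + B) ≤ c * (N A + N B)) :
    ∀ t : ℝ, 0 ≤ t →
      0 < mcLoss (Matrix.reindex (finCongr hdL) (finCongr hd0) (P L t)) →
      N (Matrix.single 0 0 (1 : ℝ)) / (Real.sqrt 2 * c) /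
          Real.sqrt (mcLoss (Matrix.reindex (finCongr hdL) (finCongr hd0) (P L t))) -
        max (Real.sqrt 2 * (N (Matrix.single 0 0 (1 : ℝ)) / (Real.sqrt 2 * c)))
          (8 * c ^ 2 *
            max (max (N (Matrix.single 0 0 (1 : ℝ))) (N (Matrix.single 0 1 (1 : ℝ))))
              (max (N (Matrix.single 1 0 (1 : ℝ))) (N (Matrix.single 1 1 (1 : ℝ))))) ≤
      N (Matrix.reindex (finCongr hdL) (finCongr hd0) (P L t)) := by
  intro t ht hloss
  have hgrad : Continuous fun X => Matrix.reindex (finCongr hdL).symm (finCongr hd0).symm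
      (mcGrad (Matrix.reindex (finCongr hdL) (finCongr hd0) X)) :=
    (continuous_mcGrad.comp (continuous_id.matrix_reindex _ _)).matrix_reindex _ _
  have hdet_t := det_reindex_prefix_pos _ _ hL hgrad hP0 hPs hQL hQs hGF hbal hdet ht
  exact quasiNorm_lower_bound_of_det_pos hc hN_nonneg hN_hom hN_tri hdet_t hloss

/-- **Quasi-norms of the product matrix grow as the loss decreases.**
Gradient flow on a depth-`L` matrix factorization (`L ≥ 2`, endpoint dimensions `2`,
hidden dimensions `≥ 2`) for the 2×2 matrix-completion loss with balanced initialization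
and `det(W_{L:1}(0)) > 0`: for any quasi-norm `N` with weakened-triangle constant `c ≥ 1`,
whenever `t ≥ 0` and `ℓ(t) > 0`,
`N(W_{L:1}(t)) ≥ a_N/√ℓ(t) − b_N`, where `a_N = N(e₁e₁ᵀ)/(√2 c)` and
`b_N = max{√2 a_N, 8c² maxᵢⱼ N(eᵢeⱼᵀ)}`.
Factors are indexed `0,…,L−1` (so `W l` maps `ℝ^{d l} → ℝ^{d (l+1)}`);
`P l t = W_{l−1}(t)⋯W_0(t)` and `Q l t = W_{L−1}(t)⋯W_l(t)` are the partial products,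
so the product matrix is `P L t`, identified with a 2×2 matrix via `reindex`. -/
theorem quasiNorm_lower_bound_deep_matrix_factorization
    (L : ℕ) (hL : 2 ≤ L)
    (d : ℕ → ℕ) (hd0 : d 0 = 2) (hdL : d L = 2)
    (hhid : ∀ l, 1 ≤ l → l ≤ L - 1 → 2 ≤ d l)
    (W : (l : ℕ) → ℝ → Matrix (Fin (d (l + 1))) (Fin (d l)) ℝ)
    (P : (l : ℕ) → ℝ → Matrix (Fin (d l)) (Fin (d 0)) ℝ)
    (hP0 : ∀ t, P 0 t = 1)
    (hPs : ∀ l, l < L → ∀ t, P (l + 1) t = W l t * P l t)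
    (Q : (l : ℕ) → ℝ → Matrix (Fin (d L)) (Fin (d l)) ℝ)
    (hQL : ∀ t, Q L t = 1)
    (hQs : ∀ l, l < L → ∀ t, Q l t = Q (l + 1) t * W l t)
    (hGF : ∀ l, l < L → ∀ t : ℝ, 0 ≤ t → ∀ i j,
      HasDerivAt (fun s => W l s i j)
        ((-((Q (l + 1) t)ᵀ *
            Matrix.reindex (finCongr hdL).symm (finCongr hd0).symm
              (mcGrad (Matrix.reindex (finCongr hdL) (finCongr hd0) (P L t))) *
            (P l t)ᵀ)) i j) t)
    (hbal : ∀ l, l + 1 < L → (W (l + 1) 0)ᵀ * W (l + 1) 0 = W l 0 * (W l 0)ᵀ)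
    (hdet : 0 < (Matrix.reindex (finCongr hdL) (finCongr hd0) (P L 0)).det)
    (N : Matrix (Fin 2) (Fin 2) ℝ → ℝ) (c : ℝ) (hc : 1 ≤ c)
    (hN_nonneg : ∀ A, 0 ≤ N A)
    (hN_zero : ∀ A, N A = 0 ↔ A = 0)
    (hN_hom : ∀ (α : ℝ) (A), N (α • A) = |α| * N A)
    (hN_tri : ∀ A B, N (A + B) ≤ c * (N A + N B)) :
    ∀ t : ℝ, 0 ≤ t →
      0 < mcLoss (Matrix.reindex (finCongr hdL) (finCongr hd0) (P L t)) →
      N (Matrix.single 0 0 (1 : ℝ)) / (Real.sqrt 2 * c) /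
          Real.sqrt (mcLoss (Matrix.reindex (finCongr hdL) (finCongr hd0) (P L t))) -
        max (Real.sqrt 2 * (N (Matrix.single 0 0 (1 : ℝ)) / (Real.sqrt 2 * c)))
          (8 * c ^ 2 *
            max (max (N (Matrix.single 0 0 (1 : ℝ))) (N (Matrix.single 0 1 (1 : ℝ))))
              (max (N (Matrix.single 1 0 (1 : ℝ))) (N (Matrix.single 1 1 (1 : ℝ))))) ≤
      N (Matrix.reindex (finCongr hdL) (finCongr hd0) (P L t)) :=
  quasiNorm_lower_bound_deep_matrix_factorization_general L hL d hd0 hdL W P hP0 hPs Q hQL hQs hGF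
    hbal hdet N c hc hN_nonneg hN_hom hN_tri
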